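/- Let ℓ, m, p be integers with |ℓ| ≥ 2 and m ∉ {0,1}. Then there is no solution to the equation 2p - 1 = ℓ·(2mp - m - p + 1) nor to 2p - 1 = ℓ·(2mp - m - p - 1). Equivalently, |2ℓmp - ℓm - ℓp - 2p + 1| ≠ |ℓ|. -/
import Mathlib


theorem em_no_solution_n_zero (ℓ m p : ℤ) (hl : 2 ≤ |ℓ|) (hm0 : m ≠ 0) (hm1 : m ≠ 1) :
    2 * p - 1 ≠ ℓ * (2 * m * p - m - p + 1) ∧
    2 * p - 1 ≠ ℓ * (2 * m * p - m - p - 1) ∧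
    |2 * ℓ * m * p - ℓ * m - ℓ * p - 2 * p + 1| ≠ |ℓ| := by
  have hm' : 3 ≤ |2 * m - 1| := by
    rcases abs_cases (2 * m - 1) with ⟨h1, h2⟩ | ⟨h1, h2⟩ <;> omega
  have h6 : 6 ≤ |ℓ * (2 * m - 1)| := by
    rw [abs_mul]
    nlinarith [abs_nonneg ℓ, abs_nonneg (2 * m - 1)]
  have h4a : 4 ≤ |2 - ℓ * (2 * m - 1)| := by
    rcases abs_cases (2 - ℓ * (2 * m - 1)) with ⟨h1, h2⟩ | ⟨h1, h2⟩ <;>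
      rcases abs_cases (ℓ * (2 * m - 1)) with ⟨h3, h4⟩ | ⟨h3, h4⟩ <;> linarith
  have h4b : 4 ≤ |ℓ * (2 * m - 1) - 2| := by
    rcases abs_cases (ℓ * (2 * m - 1) - 2) with ⟨h1, h2⟩ | ⟨h1, h2⟩ <;>
      rcases abs_cases (ℓ * (2 * m - 1)) with ⟨h3, h4⟩ | ⟨h3, h4⟩ <;> linarith
  have key1 : 2 * p - 1 ≠ ℓ * (2 * m * p - m - p + 1) := by
    intro h
    have hc : (2 * m * p - m - p + 1) * (2 - ℓ * (2 * m - 1)) = 1 := by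
      linear_combination (2 * m - 1) * h
    have hc0 : (2 * m * p - m - p + 1) ≠ 0 := by
      intro h0; rw [h0] at hc; simp at hc
    have h1 : 1 ≤ |2 * m * p - m - p + 1| := Int.one_le_abs hc0
    have habs : |2 * m * p - m - p + 1| * |2 - ℓ * (2 * m - 1)| = 1 := by
      rw [← abs_mul, hc]; rfl
    nlinarith [abs_nonneg (2 * m * p - m - p + 1)]
  have key2 : 2 * p - 1 ≠ ℓ * (2 * m * p - m - p - 1) := by
    intro h
    have hc : (2 * m * p - m - p - 1) * (ℓ * (2 * m - 1) - 2) = 3 := by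
      linear_combination (-(2 * m) + 1) * h
    have hc0 : (2 * m * p - m - p - 1) ≠ 0 := by
      intro h0; rw [h0] at hc; simp at hc
    have h1 : 1 ≤ |2 * m * p - m - p - 1| := Int.one_le_abs hc0
    have habs : |2 * m * p - m - p - 1| * |ℓ * (2 * m - 1) - 2| = 3 := by
      rw [← abs_mul, hc]; rfl
    nlinarith [abs_nonneg (2 * m * p - m - p - 1)]
  refine ⟨key1, key2, ?_⟩
  intro hEq
  rw [abs_eq_abs] at hEq
  rcases hEq with h | h
  · exact key2 (by linear_combination -h)
  · exact key1 (by linear_combination -h)
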